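/- Let d ≥ 2, β ∈ ℝ with |β| ≤ 1, let W = Σ_{i,j} E_{ij} ⊗ E_{ji} be the swap operator on ℂ^d ⊗ ℂ^d, and let ρ = (I + βW)/(d² + dβ) be the corresponding Werner state. Then both the one-sided and the two-sided negativity of quantumness of ρ equal Q_N^A(ρ) = Q_N^{AB}(ρ) = |β|(d−1)/(2(d+β)). -/

import Mathlib

open scoped Kronecker ComplexOrder
open Matrix

noncomputable def traceNorm {ι : Type*} [Fintype ι] [DecidableEq ι] (A : Matrix ι ι ℂ) : ℝ :=
  (((Matrix.posSemidef_conjTranspose_mul_self A).1.eigenvectorUnitary.1 *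
    Matrix.diagonal (((↑) : ℝ → ℂ) ∘ (√·) ∘ (Matrix.posSemidef_conjTranspose_mul_self A).1.eigenvalues) *
    (star (Matrix.posSemidef_conjTranspose_mul_self A).1.eigenvectorUnitary :
      Matrix ι ι ℂ)).trace).re

noncomputable def l1Norm {ι κ : Type*} [Fintype ι] [Fintype κ] (A : Matrix ι κ ℂ) : ℝ :=
  ∑ i, ∑ j, ‖A i j‖

def ptranspose {α β : Type*} (ρ : Matrix (α × β) (α × β) ℂ) : Matrix (α × β) (α × β) ℂ :=
  Matrix.of fun p q => ρ (p.1, q.2) (q.1, p.2)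

noncomputable def negativity {α β : Type*} [Fintype α] [Fintype β] [DecidableEq α] [DecidableEq β]
    (ρ : Matrix (α × β) (α × β) ℂ) : ℝ :=
  (traceNorm (ptranspose ρ) - 1) / 2

def matUnit {ι : Type*} [DecidableEq ι] (i j : ι) : Matrix ι ι ℂ :=
  Matrix.single i j 1

noncomputable def mcs {n : ℕ} (t : Fin n → Fin n → ℂ) :
    Matrix (Fin n × Fin n) (Fin n × Fin n) ℂ :=
  ∑ i, ∑ j, t i j • (matUnit i j ⊗ₖ matUnit i j)

def blockOf {m n : ℕ} (ρ : Matrix (Fin m × Fin n) (Fin m × Fin n) ℂ) (i j : Fin m) :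
    Matrix (Fin n) (Fin n) ℂ :=
  Matrix.of fun k l => ρ (i, k) (j, l)

noncomputable def conjU {m n : ℕ} (U : Matrix.unitaryGroup (Fin m) ℂ)
    (ρ : Matrix (Fin m × Fin n) (Fin m × Fin n) ℂ) : Matrix (Fin m × Fin n) (Fin m × Fin n) ℂ :=
  ((U : Matrix (Fin m) (Fin m) ℂ) ⊗ₖ (1 : Matrix (Fin n) (Fin n) ℂ))ᴴ * ρ *
    ((U : Matrix (Fin m) (Fin m) ℂ) ⊗ₖ (1 : Matrix (Fin n) (Fin n) ℂ))

noncomputable def conjUV {m n : ℕ} (U : Matrix.unitaryGroup (Fin m) ℂ)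
    (V : Matrix.unitaryGroup (Fin n) ℂ)
    (ρ : Matrix (Fin m × Fin n) (Fin m × Fin n) ℂ) : Matrix (Fin m × Fin n) (Fin m × Fin n) ℂ :=
  ((U : Matrix (Fin m) (Fin m) ℂ) ⊗ₖ (V : Matrix (Fin n) (Fin n) ℂ))ᴴ * ρ *
    ((U : Matrix (Fin m) (Fin m) ℂ) ⊗ₖ (V : Matrix (Fin n) (Fin n) ℂ))

noncomputable def QNA {m n : ℕ} (ρ : Matrix (Fin m × Fin n) (Fin m × Fin n) ℂ) : ℝ :=
  ⨅ U : Matrix.unitaryGroup (Fin m) ℂ,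
    ((∑ i, ∑ j, traceNorm (blockOf (conjU U ρ) i j)) - 1) / 2

noncomputable def QNAB {m n : ℕ} (ρ : Matrix (Fin m × Fin n) (Fin m × Fin n) ℂ) : ℝ :=
  ⨅ U : Matrix.unitaryGroup (Fin m) ℂ, ⨅ V : Matrix.unitaryGroup (Fin n) ℂ,
    (l1Norm (conjUV U V ρ) - 1) / 2

/-- The swap operator `W = Σ_{i,j} E_{ij} ⊗ E_{ji}` on `ℂ^d ⊗ ℂ^d`. -/
noncomputable def swapOp (d : ℕ) : Matrix (Fin d × Fin d) (Fin d × Fin d) ℂ :=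
  ∑ i, ∑ j, matUnit i j ⊗ₖ matUnit j i

/-- The Werner state `ρ = (I + βW)/(d² + dβ)`. -/
noncomputable def werner (d : ℕ) (β : ℝ) : Matrix (Fin d × Fin d) (Fin d × Fin d) ℂ :=
  (((d ^ 2 + d * β : ℝ)) : ℂ)⁻¹ •
    ((1 : Matrix (Fin d × Fin d) (Fin d × Fin d) ℂ) + (β : ℂ) • swapOp d)

/-!
Conjugating by `U ⊗ V` fixes the identity and sends the swap `W` to `(VᴴU ⊗ UᴴV)` with its row
factors exchanged, so with `A = UᴴV` the conjugated Werner state has entries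
`(δ_{ij} δ_{kl} + β conj(A_{jk}) A_{il}) / N`, `N = d² + dβ = d(d + β)`.

One-sided: for `V = 1` the blocks are `(δ_{ij} I + β u_j u_iᴴ) / N`, with `u_i` the columns of `U`.
The diagonal blocks are positive (as `β ≥ -1`) of trace `(d + β) / N`, the others are rank one of
trace norm `|β| / N`; the sum does not depend on `U`.

Two-sided: the l1-norm is `(|β| ‖A‖_{l1}² + d² + (β - |β|) d) / N`, and `‖A‖_{l1} ≥ d` for
unitary `A` because its entries have modulus at most `1` and its rows are unit vectors; `A = 1`
attains the bound.
-/

theorem sum_sum_ite_eq {ι : Type*} [Fintype ι] [DecidableEq ι] (a b : ℝ) :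
    ∑ i : ι, ∑ j : ι, (if i = j then a else b) =
      Fintype.card ι * a + (Fintype.card ι ^ 2 - Fintype.card ι) * b := by
  have h : ∀ i j : ι, (if i = j then a else b) = b + if i = j then a - b else 0 := by
    intro i j; split_ifs <;> ring
  simp only [h, Finset.sum_add_distrib, Finset.sum_ite_eq, Finset.mem_univ, if_true,
    Finset.sum_const, Finset.card_univ, nsmul_eq_mul]
  ring

theorem ciInf_ciInf_eq_of_forall_le {α ι κ : Type*} [ConditionallyCompleteLattice α]
    [Nonempty ι] [Nonempty κ] {f : ι → κ → α} {c : α} (h : ∀ i j, c ≤ f i j) {i₀ : ι} {j₀ : κ}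
    (h₀ : f i₀ j₀ = c) : ⨅ i, ⨅ j, f i j = c := by
  have hbdd : ∀ i, BddBelow (Set.range (f i)) := fun i => ⟨c, Set.forall_mem_range.2 (h i)⟩
  refine le_antisymm ?_ (le_ciInf fun i => le_ciInf (h i))
  refine (ciInf_le ⟨c, Set.forall_mem_range.2 fun i => le_ciInf (h i)⟩ i₀).trans ?_
  exact (ciInf_le (hbdd i₀) j₀).trans h₀.le

theorem norm_one_add_ofReal_mul_sub_norm {β t : ℝ} (hβ : -1 ≤ β) (ht₀ : 0 ≤ t) (ht₁ : t ≤ 1) :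
    ‖1 + (β : ℂ) * t‖ - ‖(β : ℂ) * t‖ = 1 + (β - |β|) * t := by
  have h : 0 ≤ 1 + β * t := by nlinarith
  rw [← Complex.ofReal_mul, ← Complex.ofReal_one, ← Complex.ofReal_add, Complex.norm_real,
    Complex.norm_real, Real.norm_of_nonneg h, Real.norm_eq_abs, abs_mul, abs_of_nonneg ht₀]
  ring

section TraceNorm

open scoped MatrixOrder

variable {ι : Type*} [Fintype ι]

theorem isStarProjection_vecMulVec {y : ι → ℂ} (hy : star y ⬝ᵥ y = 1) :
    IsStarProjection (vecMulVec y (star y)) where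
  isIdempotentElem := by
    rw [IsIdempotentElem, vecMulVec_mul_vecMulVec, hy, one_smul]
  isSelfAdjoint := by
    rw [IsSelfAdjoint, star_eq_conjTranspose, conjTranspose_vecMulVec, star_star]

variable [DecidableEq ι]

theorem traceNorm_eq_re_trace_of_mul_self {A B : Matrix ι ι ℂ} (hB : B.PosSemidef)
    (h : B * B = Aᴴ * A) : traceNorm A = B.trace.re := by
  have hAA := Matrix.posSemidef_conjTranspose_mul_self A
  have hT : traceNorm A = (hAA.1.cfc Real.sqrt).trace.re := by
    rw [IsHermitian.cfc, Unitary.conjStarAlgAut_apply]; rfl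
  rw [hT, ← IsHermitian.cfc_eq, ← cfcₙ_eq_cfc (hf0 := Real.sqrt_zero),
    ← CFC.sqrt_eq_real_sqrt _ hAA.nonneg, (CFC.sqrt_eq_iff _ _ hAA.nonneg hB.nonneg).2 h]

theorem traceNorm_of_posSemidef {A : Matrix ι ι ℂ} (hA : A.PosSemidef) :
    traceNorm A = A.trace.re :=
  traceNorm_eq_re_trace_of_mul_self hA (by rw [hA.isHermitian.eq])

theorem traceNorm_smul_vecMulVec {x y : ι → ℂ} (hx : star x ⬝ᵥ x = 1) (hy : star y ⬝ᵥ y = 1)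
    (c : ℂ) : traceNorm (c • vecMulVec x (star y)) = ‖c‖ := by
  have hB : ((‖c‖ : ℂ) • vecMulVec y (star y)).PosSemidef :=
    (posSemidef_vecMulVec_self_star y).smul (by positivity)
  rw [traceNorm_eq_re_trace_of_mul_self hB]
  · simp [trace_vecMulVec, dotProduct_comm y, hy]
  · rw [conjTranspose_smul, conjTranspose_vecMulVec, star_star, smul_mul_smul_comm,
      smul_mul_smul_comm, vecMulVec_mul_vecMulVec, vecMulVec_mul_vecMulVec, hx, hy, one_smul,
      Complex.star_def, ← Complex.normSq_eq_conj_mul_self, Complex.normSq_eq_norm_sq,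
      Complex.ofReal_pow, sq]

theorem posSemidef_one_add_smul_vecMulVec {y : ι → ℂ} (hy : star y ⬝ᵥ y = 1) {r : ℝ}
    (hr : -1 ≤ r) : (1 + (r : ℂ) • vecMulVec y (star y)).PosSemidef := by
  have h : 1 + (r : ℂ) • vecMulVec y (star y) =
      (1 - vecMulVec y (star y)) + ((1 + r : ℝ) : ℂ) • vecMulVec y (star y) := by
    push_cast; module
  rw [h]
  exact (isStarProjection_vecMulVec hy).one_sub_nonneg.posSemidef.add
    ((posSemidef_vecMulVec_self_star y).smul (by exact_mod_cast (by linarith : (0:ℝ) ≤ 1 + r)))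

end TraceNorm

theorem swapOp_eq_submatrix (d : ℕ) :
    swapOp d = (1 : Matrix (Fin d × Fin d) (Fin d × Fin d) ℂ).submatrix id Prod.swap := by
  ext ⟨a, b⟩ ⟨c, e⟩
  simp [swapOp, matUnit, Matrix.sum_apply, single_apply, one_apply, ite_and, Finset.sum_ite_eq,
    eq_comm]

theorem conjTranspose_kronecker_mul_swapOp_mul_kronecker {d : ℕ} (A B : Matrix (Fin d) (Fin d) ℂ) :
    (A ⊗ₖ B)ᴴ * swapOp d * (A ⊗ₖ B) = ((Bᴴ * A) ⊗ₖ (Aᴴ * B)).submatrix Prod.swap id := by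
  have h := mul_submatrix_one (Equiv.refl (Fin d × Fin d)) Prod.swap (A ⊗ₖ B)ᴴ
  rw [Equiv.coe_refl, Equiv.refl_symm, Equiv.coe_refl, Function.id_comp] at h
  rw [swapOp_eq_submatrix, h, conjTranspose_kronecker', submatrix_submatrix, Prod.swap_swap_eq,
    Function.comp_id, mul_kronecker_mul, submatrix_mul _ _ _ _ _ Function.bijective_id,
    submatrix_id_id]

section L1Norm

variable {ι κ : Type*} [Fintype ι] [Fintype κ]

theorem l1Norm_smul (c : ℂ) (A : Matrix ι κ ℂ) : l1Norm (c • A) = ‖c‖ * l1Norm A := by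
  simp only [l1Norm, Matrix.smul_apply, smul_eq_mul, norm_mul, Finset.mul_sum]

theorem l1Norm_conjTranspose (A : Matrix ι κ ℂ) : l1Norm Aᴴ = l1Norm A := by
  rw [l1Norm, l1Norm, Finset.sum_comm]
  simp only [conjTranspose_apply, norm_star]

theorem l1Norm_submatrix {ι' κ' : Type*} [Fintype ι'] [Fintype κ'] (A : Matrix ι κ ℂ)
    (e : ι' ≃ ι) (f : κ' ≃ κ) : l1Norm (A.submatrix e f) = l1Norm A := by
  simp only [l1Norm, submatrix_apply]
  rw [e.sum_comp (fun i => ∑ j, ‖A i (f j)‖)]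
  exact Finset.sum_congr rfl fun i _ => f.sum_comp (fun j => ‖A i j‖)

theorem l1Norm_kronecker {ι' κ' : Type*} [Fintype ι'] [Fintype κ'] (A : Matrix ι κ ℂ)
    (B : Matrix ι' κ' ℂ) : l1Norm (A ⊗ₖ B) = l1Norm A * l1Norm B := by
  simp only [l1Norm, kroneckerMap_apply, norm_mul, Fintype.sum_prod_type, Finset.sum_mul_sum]

theorem l1Norm_one_add [DecidableEq ι] (A : Matrix ι ι ℂ) :
    l1Norm (1 + A) = l1Norm A + ∑ i, (‖1 + A i i‖ - ‖A i i‖) := by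
  have h : ∀ i j, ‖(1 + A) i j‖ = ‖A i j‖ + if i = j then ‖1 + A i i‖ - ‖A i i‖ else 0 := by
    intro i j
    rcases eq_or_ne i j with rfl | hij <;> simp [one_apply, *]
  simp only [l1Norm, h, Finset.sum_add_distrib, Finset.sum_ite_eq, Finset.mem_univ, if_true]

theorem l1Norm_one [DecidableEq ι] : l1Norm (1 : Matrix ι ι ℂ) = Fintype.card ι := by
  simp [l1Norm, one_apply, apply_ite]

end L1Norm

section Unitary

variable {ι : Type*} [Fintype ι] [DecidableEq ι] {A : Matrix ι ι ℂ}

theorem star_transpose_dotProduct_transpose (U : unitaryGroup ι ℂ) (i : ι) :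
    star ((U : Matrix ι ι ℂ)ᵀ i) ⬝ᵥ (U : Matrix ι ι ℂ)ᵀ i = 1 := by
  simpa [mul_apply, dotProduct] using congrFun₂ (UnitaryGroup.star_mul_self U) i i

theorem sum_norm_sq_row_of_mem_unitaryGroup (hA : A ∈ unitaryGroup ι ℂ) (i : ι) :
    ∑ j, ‖A i j‖ ^ 2 = 1 := by
  have h := congrArg (fun M => (M i i).re) (mem_unitaryGroup_iff.mp hA)
  simp only [mul_apply, star_apply, one_apply_eq, Complex.one_re, Complex.re_sum,
    Complex.star_def, Complex.mul_conj, Complex.normSq_eq_norm_sq] at h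
  exact_mod_cast h

theorem sum_norm_sq_of_mem_unitaryGroup (hA : A ∈ unitaryGroup ι ℂ) :
    ∑ p : ι × ι, ‖A p.1 p.2‖ ^ 2 = Fintype.card ι := by
  simp [Fintype.sum_prod_type, sum_norm_sq_row_of_mem_unitaryGroup hA]

theorem card_le_l1Norm_of_mem_unitaryGroup (hA : A ∈ unitaryGroup ι ℂ) :
    (Fintype.card ι : ℝ) ≤ l1Norm A := by
  calc (Fintype.card ι : ℝ) = ∑ i, ∑ j, ‖A i j‖ ^ 2 := by
        rw [← sum_norm_sq_of_mem_unitaryGroup hA, Fintype.sum_prod_type]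
    _ ≤ l1Norm A := by
        refine Finset.sum_le_sum fun i _ => Finset.sum_le_sum fun j _ => ?_
        have := entry_norm_bound_of_unitary hA i j
        nlinarith [norm_nonneg (A i j)]

theorem l1Norm_one_add_smul_swap (hA : A ∈ unitaryGroup ι ℂ) {β : ℝ} (hβ : -1 ≤ β) :
    l1Norm (1 + (β : ℂ) • (Aᴴ ⊗ₖ A).submatrix Prod.swap id) =
      |β| * l1Norm A ^ 2 + Fintype.card ι ^ 2 + (β - |β|) * Fintype.card ι := by
  have hswap := l1Norm_submatrix (Aᴴ ⊗ₖ A) (Equiv.prodComm ι ι) (Equiv.refl _)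
  rw [Equiv.coe_prodComm, Equiv.coe_refl] at hswap
  have hdiag : ∀ p : ι × ι, ‖1 + ((β : ℂ) • (Aᴴ ⊗ₖ A).submatrix Prod.swap id) p p‖ -
      ‖((β : ℂ) • (Aᴴ ⊗ₖ A).submatrix Prod.swap id) p p‖ = 1 + (β - |β|) * ‖A p.1 p.2‖ ^ 2 := by
    rintro ⟨i, k⟩
    have h := norm_one_add_ofReal_mul_sub_norm hβ (sq_nonneg ‖A i k‖)
      (pow_le_one₀ (norm_nonneg _) (entry_norm_bound_of_unitary hA i k))
    simpa [Complex.star_def, Complex.conj_mul'] using h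
  rw [l1Norm_one_add, l1Norm_smul, hswap, l1Norm_kronecker, l1Norm_conjTranspose,
    Finset.sum_congr rfl fun p _ => hdiag p, Finset.sum_add_distrib, ← Finset.mul_sum,
    sum_norm_sq_of_mem_unitaryGroup hA]
  simp only [Complex.norm_real, Real.norm_eq_abs, Finset.sum_const, Finset.card_univ,
    Fintype.card_prod, nsmul_eq_mul, Nat.cast_mul, mul_one]
  ring

end Unitary

section Werner

variable {d : ℕ} {β : ℝ}

theorem conjUV_werner (U V : unitaryGroup (Fin d) ℂ) :
    conjUV U V (werner d β) = ((d ^ 2 + d * β : ℝ) : ℂ)⁻¹ •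
      (1 + (β : ℂ) • ((U⁻¹ * V).1ᴴ ⊗ₖ (U⁻¹ * V).1).submatrix Prod.swap id) := by
  have hX : ((U : Matrix (Fin d) (Fin d) ℂ) ⊗ₖ (V : Matrix (Fin d) (Fin d) ℂ))ᴴ * (U ⊗ₖ V) = 1 :=
    Unitary.star_mul_self_of_mem (kronecker_mem_unitary U.2 V.2)
  rw [conjUV, werner, Matrix.mul_smul, Matrix.smul_mul, Matrix.mul_add, Matrix.add_mul,
    Matrix.mul_one, hX, Matrix.mul_smul, Matrix.smul_mul,
    conjTranspose_kronecker_mul_swapOp_mul_kronecker]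
  simp [star_eq_conjTranspose, conjTranspose_mul]

theorem blockOf_conjU_werner (U : unitaryGroup (Fin d) ℂ) (i j : Fin d) :
    blockOf (conjU U (werner d β)) i j = ((d ^ 2 + d * β : ℝ) : ℂ)⁻¹ •
      ((if i = j then 1 else 0) +
        (β : ℂ) • vecMulVec ((U : Matrix _ _ ℂ)ᵀ j) (star ((U : Matrix _ _ ℂ)ᵀ i))) := by
  ext k l
  rw [blockOf, of_apply, conjU, ← UnitaryGroup.one_val, ← conjUV, conjUV_werner]
  split_ifs with hij <;> simp [hij, one_apply, vecMulVec_apply, mul_comm]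

theorem traceNorm_blockOf_conjU_werner (hβ : -1 ≤ β) (hN : 0 < (d ^ 2 + d * β : ℝ))
    (U : unitaryGroup (Fin d) ℂ) (i j : Fin d) :
    traceNorm (blockOf (conjU U (werner d β)) i j) =
      if i = j then (d + β) / (d ^ 2 + d * β) else |β| / (d ^ 2 + d * β) := by
  rw [blockOf_conjU_werner]
  generalize (d ^ 2 + d * β : ℝ) = N at hN ⊢
  split_ifs with hij
  · subst hij
    have hpsd :=
      (posSemidef_one_add_smul_vecMulVec (star_transpose_dotProduct_transpose U i) hβ).smul
        (inv_nonneg.2 (by exact_mod_cast hN.le : (0 : ℂ) ≤ (N : ℂ)))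
    rw [traceNorm_of_posSemidef hpsd, trace_smul, trace_add, trace_one, trace_smul,
      trace_vecMulVec, dotProduct_comm, star_transpose_dotProduct_transpose, ← Complex.ofReal_inv]
    simp only [smul_eq_mul, Complex.re_ofReal_mul]
    simp [div_eq_inv_mul]
  · rw [zero_add, smul_smul, traceNorm_smul_vecMulVec (star_transpose_dotProduct_transpose U j)
      (star_transpose_dotProduct_transpose U i)]
    simp [div_eq_inv_mul, abs_of_pos hN]

theorem l1Norm_conjUV_werner (hβ : -1 ≤ β) (hN : 0 < (d ^ 2 + d * β : ℝ))
    (U V : unitaryGroup (Fin d) ℂ) :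
    l1Norm (conjUV U V (werner d β)) =
      (|β| * l1Norm (U⁻¹ * V).1 ^ 2 + d ^ 2 + (β - |β|) * d) / (d ^ 2 + d * β) := by
  rw [conjUV_werner, l1Norm_smul, l1Norm_one_add_smul_swap (U⁻¹ * V).2 hβ, norm_inv,
    Complex.norm_real, Real.norm_of_nonneg hN.le, Fintype.card_fin, inv_mul_eq_div]

theorem QNA_werner (hd : (0 : ℝ) < d) (hβ : -1 ≤ β) (hdβ : 0 < (d : ℝ) + β) :
    QNA (werner d β) = |β| * ((d : ℝ) - 1) / (2 * ((d : ℝ) + β)) := by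
  have hN : 0 < (d ^ 2 + d * β : ℝ) := by nlinarith
  have hval : ∀ U : unitaryGroup (Fin d) ℂ,
      ((∑ i, ∑ j, traceNorm (blockOf (conjU U (werner d β)) i j)) - 1) / 2 =
        |β| * ((d : ℝ) - 1) / (2 * ((d : ℝ) + β)) := by
    intro U
    simp only [traceNorm_blockOf_conjU_werner hβ hN, sum_sum_ite_eq, Fintype.card_fin]
    field_simp
    ring
  have : Nonempty (unitaryGroup (Fin d) ℂ) := ⟨1⟩
  simp only [QNA, hval, ciInf_const]

theorem QNAB_werner (hd : (0 : ℝ) < d) (hβ : -1 ≤ β) (hdβ : 0 < (d : ℝ) + β) :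
    QNAB (werner d β) = |β| * ((d : ℝ) - 1) / (2 * ((d : ℝ) + β)) := by
  have hN : 0 < (d ^ 2 + d * β : ℝ) := by nlinarith
  have hval : ∀ U V : unitaryGroup (Fin d) ℂ, (l1Norm (conjUV U V (werner d β)) - 1) / 2 =
      |β| * (l1Norm (U⁻¹ * V).1 ^ 2 - d) / (2 * (d ^ 2 + d * β)) := by
    intro U V
    rw [l1Norm_conjUV_werner hβ hN]
    field_simp
    ring
  have hT : |β| * ((d : ℝ) - 1) / (2 * ((d : ℝ) + β)) =
      |β| * ((d : ℝ) ^ 2 - d) / (2 * (d ^ 2 + d * β)) := by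
    field_simp
  have : Nonempty (unitaryGroup (Fin d) ℂ) := ⟨1⟩
  refine ciInf_ciInf_eq_of_forall_le (fun U V => ?_) (i₀ := 1) (j₀ := 1) ?_
  · have hs := card_le_l1Norm_of_mem_unitaryGroup (U⁻¹ * V).2
    rw [Fintype.card_fin] at hs
    rw [hval, hT]
    gcongr
  · rw [hval, hT, inv_one, one_mul, UnitaryGroup.one_val, l1Norm_one, Fintype.card_fin]

end Werner

/-- the one-sided and two-sided negativity of quantumness of the Werner
state both equal `|β|(d−1)/(2(d+β))`. -/
theorem stmt_14 (d : ℕ) (hd : 2 ≤ d) (β : ℝ) (hβ : |β| ≤ 1) :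
    QNA (werner d β) = |β| * ((d : ℝ) - 1) / (2 * ((d : ℝ) + β)) ∧
    QNAB (werner d β) = |β| * ((d : ℝ) - 1) / (2 * ((d : ℝ) + β)) := by
  have hβ' : -1 ≤ β := (abs_le.mp hβ).1
  have hd' : (2 : ℝ) ≤ d := by exact_mod_cast hd
  have hdβ : 0 < (d : ℝ) + β := by linarith
  exact ⟨QNA_werner (by positivity) hβ' hdβ, QNAB_werner (by positivity) hβ' hdβ⟩
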